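/- Strengthened concavity of the von Neumann entropy: for any density matrices ρ and ξ on ℂ^d and any p ∈ [0,1], S((1−p)ρ + pξ) − [(1−p)S(ρ) + pS(ξ)] ≥ (p(1−p)/(2 ln 2))·‖ρ − ξ‖₂². -/

import Mathlib

/-!
The function `f t = -t log t + t² / 2` is concave on `[0, 1]` (`f'' t = 1 - 1/t`), and concavity
passes to `A ↦ ∑ᵢ f (λᵢ A)` on Hermitian matrices with spectrum in `[0, 1]`: in the eigenbasis
`(uᵢ)` of the mixture `M`, `λᵢ M` is the same mixture of the diagonal entries `⟪uᵢ, A uᵢ⟫`, and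
each of these is an average of the `λₖ A` with doubly stochastic weights `‖⟪uᵢ, vₖ⟫‖²`, so
Jensen's inequality gives `∑ᵢ f ⟪uᵢ, A uᵢ⟫ ≥ ∑ₖ f (λₖ A)` (Peierls). As `∑ᵢ (λᵢ A)² = ‖A‖₂²`,
the quadratic part of `f` contributes `(1-p)‖ρ‖₂² + p‖ξ‖₂² - ‖M‖₂² = p(1-p)‖ρ - ξ‖₂²`.
-/

open scoped ComplexOrder

noncomputable section

/-- The Frobenius (Hilbert–Schmidt) norm of a complex matrix. -/
def frob {m n : Type*} [Fintype m] [Fintype n] (A : Matrix m n ℂ) : ℝ :=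
  Real.sqrt (∑ i, ∑ j, ‖A i j‖ ^ 2)

/-- The von Neumann entropy in bits: S(ρ) = −∑ᵢ λᵢ log₂ λᵢ over the eigenvalues of ρ
(with the convention 0·log₂ 0 = 0, which holds since `Real.logb 2 0 = 0`). -/
def vnEntropy {n : Type*} [Fintype n] [DecidableEq n] (ρ : Matrix n n ℂ) : ℝ :=
  if h : ρ.IsHermitian then ∑ i, -(h.eigenvalues i * Real.logb 2 (h.eigenvalues i)) else 0

open Matrix Real

lemma concaveOn_negMulLog_add_sq_div_two :
    ConcaveOn ℝ (Set.Icc 0 1) (fun t => negMulLog t + t ^ 2 / 2) := by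
  refine concaveOn_of_hasDerivWithinAt2_nonpos (convex_Icc 0 1)
    (f' := fun t => -log t - 1 + t) (f'' := fun t => -t⁻¹ + 1)
    (by fun_prop) (fun t ht => ?_) (fun t ht => ?_) (fun t ht => ?_) <;>
    rw [interior_Icc] at ht
  · refine (((hasDerivAt_negMulLog ht.1.ne').add
      ((hasDerivAt_pow 2 t).div_const 2)).congr_deriv ?_).hasDerivWithinAt
    push_cast
    ring
  · exact (((hasDerivAt_log ht.1.ne').neg.sub_const 1).add (hasDerivAt_id t)).hasDerivWithinAt
  · linarith [one_le_inv₀ ht.1 |>.2 ht.2.le]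

lemma norm_smul_add_smul_sq {E : Type*} [NormedAddCommGroup E] [InnerProductSpace ℝ E]
    {a b : ℝ} (hab : a + b = 1) (x y : E) :
    ‖a • x + b • y‖ ^ 2 = a * ‖x‖ ^ 2 + b * ‖y‖ ^ 2 - a * b * ‖x - y‖ ^ 2 := by
  rw [norm_add_sq_real, norm_sub_sq_real, norm_smul, norm_smul, real_inner_smul_left,
    real_inner_smul_right, mul_pow, mul_pow, norm_eq_abs, norm_eq_abs, sq_abs, sq_abs]
  obtain rfl := eq_sub_of_add_eq hab
  ring

section Frobenius

variable {m n : Type*} [Fintype m] [Fintype n]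

lemma frob_sq (A : Matrix m n ℂ) : frob A ^ 2 = ∑ i, ∑ j, ‖A i j‖ ^ 2 :=
  sq_sqrt (by positivity)

lemma frob_smul_add_smul_sq {a b : ℝ} (hab : a + b = 1) (A B : Matrix m n ℂ) :
    frob ((a : ℂ) • A + (b : ℂ) • B) ^ 2 =
      a * frob A ^ 2 + b * frob B ^ 2 - a * b * frob (A - B) ^ 2 := by
  simp only [frob_sq, Complex.coe_smul, Matrix.add_apply, Matrix.smul_apply,
    norm_smul_add_smul_sq hab, Matrix.sub_apply, Finset.sum_sub_distrib, Finset.sum_add_distrib,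
    Finset.mul_sum]

end Frobenius

section Stochastic

variable {n : Type*} [Fintype n] [DecidableEq n]

lemma Matrix.of_norm_sq_mem_doublyStochastic {C : Matrix n n ℂ} (hC : C ∈ unitaryGroup n ℂ) :
    (of fun i k => ‖C i k‖ ^ 2) ∈ doublyStochastic ℝ n := by
  have hrow (i : n) : ∑ k, ‖C i k‖ ^ 2 = 1 := by
    have := congr_fun₂ (mem_unitaryGroup_iff.mp hC) i i
    simp only [mul_apply, star_apply, RCLike.star_def, Complex.mul_conj', one_apply_eq] at this
    exact_mod_cast this
  have hcol (k : n) : ∑ i, ‖C i k‖ ^ 2 = 1 := by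
    have := congr_fun₂ (mem_unitaryGroup_iff'.mp hC) k k
    simp only [mul_apply, star_apply, RCLike.star_def, Complex.conj_mul', one_apply_eq] at this
    exact_mod_cast this
  exact mem_doublyStochastic_iff_sum.2 ⟨fun _ _ => by simp only [of_apply]; positivity, hrow, hcol⟩

lemma Convex.mulVec_mem {s : Set ℝ} (hs : Convex ℝ s) {W : Matrix n n ℝ}
    (hW : W ∈ rowStochastic ℝ n) {x : n → ℝ} (hx : ∀ k, x k ∈ s) (i : n) : (W *ᵥ x) i ∈ s :=
  hs.sum_mem (fun _ _ => nonneg_of_mem_rowStochastic hW) (sum_row_of_mem_rowStochastic hW i)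
    fun k _ => hx k

lemma ConcaveOn.sum_le_sum_map_mulVec {s : Set ℝ} {f : ℝ → ℝ} (hf : ConcaveOn ℝ s f)
    {W : Matrix n n ℝ} (hW : W ∈ doublyStochastic ℝ n) {x : n → ℝ} (hx : ∀ k, x k ∈ s) :
    ∑ k, f (x k) ≤ ∑ i, f ((W *ᵥ x) i) :=
  calc ∑ k, f (x k) = ∑ i, ∑ k, W i k * f (x k) := by
        rw [Finset.sum_comm]
        simp_rw [← Finset.sum_mul, sum_col_of_mem_doublyStochastic hW, one_mul]
    _ ≤ ∑ i, f ((W *ᵥ x) i) := Finset.sum_le_sum fun i _ =>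
        hf.le_map_sum (fun _ _ => nonneg_of_mem_doublyStochastic hW)
          (sum_row_of_mem_doublyStochastic hW i) (fun k _ => hx k)

end Stochastic

namespace Matrix.IsHermitian

variable {n : Type*} [Fintype n] [DecidableEq n] {A : Matrix n n ℂ}

lemma eigenvalues_eq_re_diag_conj (hA : A.IsHermitian) (i : n) :
    hA.eigenvalues i = ((star (hA.eigenvectorUnitary : Matrix n n ℂ) * A *
      (hA.eigenvectorUnitary : Matrix n n ℂ)) i i).re := by
  have := hA.conjStarAlgAut_star_eigenvectorUnitary
  rw [Unitary.conjStarAlgAut_apply, Unitary.coe_star, star_star] at this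
  simp [this]

/-- Entry `(i, k)` is `‖⟪uᵢ, vₖ⟫‖²` for the columns `uᵢ` of `U` and the eigenvectors `vₖ` of `A`. -/
def overlapWeights (hA : A.IsHermitian) (U : Matrix n n ℂ) : Matrix n n ℝ :=
  of fun i k => ‖(star U * (hA.eigenvectorUnitary : Matrix n n ℂ)) i k‖ ^ 2

lemma overlapWeights_mem_doublyStochastic (hA : A.IsHermitian) {U : Matrix n n ℂ}
    (hU : U ∈ unitaryGroup n ℂ) : hA.overlapWeights U ∈ doublyStochastic ℝ n :=
  of_norm_sq_mem_doublyStochastic (mul_mem (Unitary.star_mem hU) hA.eigenvectorUnitary.2)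

lemma diag_conj_eq_mulVec (hA : A.IsHermitian) (U : Matrix n n ℂ) (i : n) :
    (star U * A * U) i i = (hA.overlapWeights U *ᵥ hA.eigenvalues) i := by
  set C := star U * (hA.eigenvectorUnitary : Matrix n n ℂ)
  have hconj : star U * A * U = C * diagonal (RCLike.ofReal ∘ hA.eigenvalues) * star C := by
    conv_lhs => rw [hA.spectral_theorem, Unitary.conjStarAlgAut_apply]
    simp only [C, star_mul, star_star, Matrix.mul_assoc]
  rw [hconj, mul_apply]
  simp only [mul_diagonal, star_apply, RCLike.star_def, overlapWeights, mulVec, dotProduct,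
    of_apply]
  push_cast
  refine Finset.sum_congr rfl fun k _ => ?_
  rw [← Complex.mul_conj']
  simp only [Function.comp_apply, RCLike.ofReal_eq_complex_ofReal]
  ring

lemma sum_sq_eigenvalues_eq_frob_sq (hA : A.IsHermitian) :
    ∑ i, hA.eigenvalues i ^ 2 = frob A ^ 2 := by
  have htrace : (A * A).trace = ∑ i, ((hA.eigenvalues i ^ 2 : ℝ) : ℂ) := by
    conv_lhs => rw [hA.spectral_theorem, ← map_mul, Unitary.conjStarAlgAut_apply,
      trace_mul_cycle, Unitary.coe_star_mul_self, Matrix.one_mul, diagonal_mul_diagonal,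
      trace_diagonal]
    simp [sq]
  have hentry (i j : n) : A i j * A j i = ((‖A i j‖ ^ 2 : ℝ) : ℂ) := by
    rw [← hA.apply j i, RCLike.star_def, Complex.mul_conj']
    push_cast
    rfl
  simp only [trace, diag_apply, mul_apply, hentry] at htrace
  rw [frob_sq]
  exact_mod_cast htrace.symm

end Matrix.IsHermitian

lemma vnEntropy_eq_sum_negMulLog_div {n : Type*} [Fintype n] [DecidableEq n] {A : Matrix n n ℂ}
    (hA : A.IsHermitian) : vnEntropy A = (∑ i, negMulLog (hA.eigenvalues i)) / log 2 := by
  simp only [vnEntropy, dif_pos hA, Finset.sum_div, logb, negMulLog]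
  exact Finset.sum_congr rfl fun _ _ => by ring

lemma Matrix.PosSemidef.eigenvalues_mem_Icc_of_trace_eq_one {n : Type*} [Fintype n] [DecidableEq n]
    {A : Matrix n n ℂ} (hA : A.PosSemidef) (htr : A.trace = 1) (i : n) :
    hA.1.eigenvalues i ∈ Set.Icc 0 1 := by
  have hsum : ∑ k, hA.1.eigenvalues k = 1 := by
    rwa [hA.1.trace_eq_sum_eigenvalues, ← RCLike.ofReal_sum, ← RCLike.ofReal_one,
      RCLike.ofReal_inj] at htr
  exact ⟨hA.eigenvalues_nonneg i,
    hsum ▸ Finset.single_le_sum (fun k _ => hA.eigenvalues_nonneg k) (Finset.mem_univ i)⟩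

section TraceFunction

variable {n : Type*} [Fintype n] [DecidableEq n] {s : Set ℝ} {f : ℝ → ℝ} {A B : Matrix n n ℂ}

lemma Matrix.IsHermitian.re_diag_conj_mem (hA : A.IsHermitian) (hs : Convex ℝ s)
    (hAs : ∀ k, hA.eigenvalues k ∈ s) {U : Matrix n n ℂ} (hU : U ∈ unitaryGroup n ℂ) (i : n) :
    ((star U * A * U) i i).re ∈ s := by
  rw [hA.diag_conj_eq_mulVec, Complex.ofReal_re]
  exact hs.mulVec_mem (mem_doublyStochastic_iff_mem_rowStochastic_and_mem_colStochastic.1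
    (hA.overlapWeights_mem_doublyStochastic hU)).1 hAs i

lemma ConcaveOn.sum_map_eigenvalues_le_sum_map_re_diag_conj (hf : ConcaveOn ℝ s f)
    (hA : A.IsHermitian) (hAs : ∀ k, hA.eigenvalues k ∈ s) {U : Matrix n n ℂ}
    (hU : U ∈ unitaryGroup n ℂ) :
    ∑ k, f (hA.eigenvalues k) ≤ ∑ i, f ((star U * A * U) i i).re := by
  simp only [hA.diag_conj_eq_mulVec, Complex.ofReal_re]
  exact hf.sum_le_sum_map_mulVec (hA.overlapWeights_mem_doublyStochastic hU) hAs

theorem ConcaveOn.mul_sum_map_eigenvalues_add_le (hf : ConcaveOn ℝ s f)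
    (hA : A.IsHermitian) (hB : B.IsHermitian)
    (hAs : ∀ k, hA.eigenvalues k ∈ s) (hBs : ∀ k, hB.eigenvalues k ∈ s)
    {a b : ℝ} (ha : 0 ≤ a) (hb : 0 ≤ b) (hab : a + b = 1)
    (hM : ((a : ℂ) • A + (b : ℂ) • B).IsHermitian) :
    a * ∑ k, f (hA.eigenvalues k) + b * ∑ k, f (hB.eigenvalues k) ≤
      ∑ i, f (hM.eigenvalues i) := by
  set U := (hM.eigenvectorUnitary : Matrix n n ℂ)
  have hU : U ∈ unitaryGroup n ℂ := hM.eigenvectorUnitary.2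
  have hdiag (i : n) : hM.eigenvalues i =
      a * ((star U * A * U) i i).re + b * ((star U * B * U) i i).re := by
    simp [hM.eigenvalues_eq_re_diag_conj, U, Matrix.mul_add, Matrix.add_mul]
  calc a * ∑ k, f (hA.eigenvalues k) + b * ∑ k, f (hB.eigenvalues k)
      ≤ a * ∑ i, f ((star U * A * U) i i).re + b * ∑ i, f ((star U * B * U) i i).re := by
        gcongr _ * ?_ + _ * ?_
        · exact hf.sum_map_eigenvalues_le_sum_map_re_diag_conj hA hAs hU
        · exact hf.sum_map_eigenvalues_le_sum_map_re_diag_conj hB hBs hU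
    _ ≤ ∑ i, f (hM.eigenvalues i) := by
        simp only [Finset.mul_sum, ← Finset.sum_add_distrib, hdiag]
        exact Finset.sum_le_sum fun i _ => hf.2 (hA.re_diag_conj_mem hf.1 hAs hU i)
          (hB.re_diag_conj_mem hf.1 hBs hU i) ha hb hab

end TraceFunction

lemma Matrix.IsHermitian.mul_sum_negMulLog_eigenvalues_add_le {n : Type*} [Fintype n]
    [DecidableEq n] {A B : Matrix n n ℂ} (hA : A.IsHermitian) (hB : B.IsHermitian)
    (hAs : ∀ k, hA.eigenvalues k ∈ Set.Icc 0 1) (hBs : ∀ k, hB.eigenvalues k ∈ Set.Icc 0 1)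
    {a b : ℝ} (ha : 0 ≤ a) (hb : 0 ≤ b) (hab : a + b = 1)
    (hM : ((a : ℂ) • A + (b : ℂ) • B).IsHermitian) :
    a * b / 2 * frob (A - B) ^ 2 ≤ ∑ i, negMulLog (hM.eigenvalues i) -
      (a * ∑ k, negMulLog (hA.eigenvalues k) + b * ∑ k, negMulLog (hB.eigenvalues k)) := by
  have h := concaveOn_negMulLog_add_sq_div_two.mul_sum_map_eigenvalues_add_le hA hB hAs hBs
    ha hb hab hM
  simp only [Finset.sum_add_distrib, ← Finset.sum_div, sum_sq_eigenvalues_eq_frob_sq,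
    frob_smul_add_smul_sq hab] at h
  linarith

theorem strengthened_entropy_concavity {d : ℕ} (ρ ξ : Matrix (Fin d) (Fin d) ℂ)
    (hρ : ρ.PosSemidef) (hρt : ρ.trace = 1)
    (hξ : ξ.PosSemidef) (hξt : ξ.trace = 1)
    (p : ℝ) (hp : p ∈ Set.Icc (0 : ℝ) 1) :
    vnEntropy (((1 - p : ℝ) : ℂ) • ρ + ((p : ℝ) : ℂ) • ξ) -
        ((1 - p) * vnEntropy ρ + p * vnEntropy ξ)
      ≥ (p * (1 - p) / (2 * Real.log 2)) * frob (ρ - ξ) ^ 2 := by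
  have hM : (((1 - p : ℝ) : ℂ) • ρ + ((p : ℝ) : ℂ) • ξ).IsHermitian :=
    ((hρ.smul (Complex.zero_le_real.2 (sub_nonneg.2 hp.2))).add
      (hξ.smul (Complex.zero_le_real.2 hp.1))).1
  have key := hρ.1.mul_sum_negMulLog_eigenvalues_add_le hξ.1
    (hρ.eigenvalues_mem_Icc_of_trace_eq_one hρt) (hξ.eigenvalues_mem_Icc_of_trace_eq_one hξt)
    (sub_nonneg.2 hp.2) hp.1 (sub_add_cancel 1 p) hM
  rw [vnEntropy_eq_sum_negMulLog_div hM, vnEntropy_eq_sum_negMulLog_div hρ.1,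
    vnEntropy_eq_sum_negMulLog_div hξ.1, ge_iff_le]
  calc p * (1 - p) / (2 * log 2) * frob (ρ - ξ) ^ 2
      = (1 - p) * p / 2 * frob (ρ - ξ) ^ 2 / log 2 := by ring
    _ ≤ _ := div_le_div_of_nonneg_right key (log_pos one_lt_two).le
    _ = _ := by ring
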